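/- arXiv:1810.10885 — 3 statements merged into one kernel-verified Lean document; each statement's English description precedes it below -/
import Mathlib

section
/- Let p be a prime and n ≥ 2 an integer. There is no collection of group homomorphisms F_B : GL_n(B) → GL_n(B), one for each commutative ring B satisfying p²·1 = 0 in B, natural with respect to all ring homomorphisms between such rings (i.e. F_{B'} ∘ GL_n(f) = GL_n(f) ∘ F_B for every ring homomorphism f : B → B'), and such that F_B equals the entrywise Frobenius for every such B in which moreover p·1 = 0. In other words, the Frobenius homomorphism of GL_n does not lift modulo p². -/
universe u

open Matrix Polynomial

section AuxGL

variable {n : ℕ} {i₀ j₀ : Fin n} {B B' : Type*} [CommRing B] [CommRing B']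

private lemma std_mul_std (h : i₀ ≠ j₀) (a b : B) :
    (a • single i₀ j₀ (1 : B)) * (b • single i₀ j₀ 1) = 0 := by
  rw [Matrix.smul_mul, Matrix.mul_smul, single_mul_single_of_ne _ _ _ _ h.symm,
    smul_zero, smul_zero]

/-- The elementary unipotent `1 + a E_{i₀ j₀}` as an element of `GL_n`. -/
noncomputable def eUnit (h : i₀ ≠ j₀) (a : B) : GeneralLinearGroup (Fin n) B where
  val := 1 + a • single i₀ j₀ 1
  inv := 1 - a • single i₀ j₀ 1
  val_inv := by
    rw [mul_sub, mul_one, add_mul, one_mul, std_mul_std h, add_zero, add_sub_cancel_right]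
  inv_val := by
    rw [mul_add, mul_one, sub_mul, one_mul, std_mul_std h, sub_zero, sub_add_cancel]

lemma eUnit_val (h : i₀ ≠ j₀) (a : B) :
    ((eUnit h a : GeneralLinearGroup (Fin n) B) : Matrix (Fin n) (Fin n) B)
      = 1 + a • single i₀ j₀ 1 := rfl

lemma eUnit_add (h : i₀ ≠ j₀) (a b : B) :
    eUnit h (a + b) = eUnit h a * eUnit h b := by
  apply Units.ext
  show (1 : Matrix (Fin n) (Fin n) B) + (a + b) • single i₀ j₀ 1
      = ((1 : Matrix (Fin n) (Fin n) B) + a • single i₀ j₀ 1)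
        * (1 + b • single i₀ j₀ 1)
  rw [mul_add, mul_one, add_mul, one_mul, std_mul_std h, add_zero, add_smul, add_assoc]

lemma map_stdBasisMatrix (f : B →+* B') (a : B) (i j : Fin n) :
    (single i j a).map f = single i j (f a) := by
  ext i' j'
  rw [Matrix.map_apply]
  by_cases hc : i = i' ∧ j = j'
  · obtain ⟨rfl, rfl⟩ := hc
    rw [single_apply_same, single_apply_same]
  · rw [single_apply_of_ne _ _ _ _ _ hc, single_apply_of_ne _ _ _ _ _ hc,
      f.map_zero]

lemma map_eUnit (f : B →+* B') (h : i₀ ≠ j₀) (a : B) :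
    GeneralLinearGroup.map f (eUnit h a) = eUnit h (f a) := by
  apply Units.ext
  show (RingHom.mapMatrix f) ((1 : Matrix (Fin n) (Fin n) B) + a • single i₀ j₀ 1)
      = (1 : Matrix (Fin n) (Fin n) B') + f a • single i₀ j₀ 1
  rw [smul_single, smul_eq_mul, mul_one, smul_single, smul_eq_mul, mul_one,
    map_add, _root_.map_one, RingHom.mapMatrix_apply, map_stdBasisMatrix]

lemma uMat_entry (h : i₀ ≠ j₀) (a : B) (i j : Fin n) :
    (((1 : Matrix (Fin n) (Fin n) B) + a • single i₀ j₀ 1 :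
        Matrix (Fin n) (Fin n) B)) i j
      = if i = j then 1 else if i = i₀ ∧ j = j₀ then a else 0 := by
  rw [Matrix.add_apply, Matrix.smul_apply]
  by_cases hij : i = j
  · subst hij
    have : ¬ (i₀ = i ∧ j₀ = i) := by rintro ⟨rfl, rfl⟩; exact h rfl
    rw [Matrix.one_apply_eq, single_apply_of_ne _ _ _ _ _ this, smul_zero,
      add_zero, if_pos rfl]
  · rw [Matrix.one_apply_ne hij, if_neg hij, zero_add]
    by_cases hc : i = i₀ ∧ j = j₀
    · obtain ⟨rfl, rfl⟩ := hc
      rw [single_apply_same, smul_eq_mul, mul_one, if_pos ⟨rfl, rfl⟩]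
    · have hc' : ¬ (i₀ = i ∧ j₀ = j) := fun ⟨h1, h2⟩ => hc ⟨h1.symm, h2.symm⟩
      rw [single_apply_of_ne _ _ _ _ _ hc', smul_zero, if_neg hc]

end AuxGL

section AuxULift

variable {A B : Type} [CommRing A] [CommRing B]

/-- Lift a ring hom to `ULift`s. -/
def uhom (f : A →+* B) : ULift.{u} A →+* ULift.{u} B :=
  (ULift.ringEquiv.symm.toRingHom.comp f).comp ULift.ringEquiv.toRingHom

lemma uhom_down (f : A →+* B) (a : ULift.{u} A) : (uhom f a).down = f a.down := rfl

lemma uhom_up (f : A →+* B) (a : A) : uhom.{u} f (ULift.up a) = ULift.up (f a) := rfl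

lemma pow_sq_zero {p : ℕ} (f : A →+* B) (h : (p : A) ^ 2 = 0) : (p : B) ^ 2 = 0 := by
  rw [← map_natCast f, ← map_pow, h, map_zero]

end AuxULift

section AuxCoeff

variable {A : Type} [CommRing A] (p : ℕ)

/-- coefficient extraction lemma for the "substitution X ↦ x + y" hom. -/
lemma coeff_subst_add (hp : 2 ≤ p) (g : Polynomial A) :
    ((eval₂ ((Polynomial.C.comp Polynomial.C :
        A →+* Polynomial (Polynomial A))) (Polynomial.C Polynomial.X + Polynomial.X) g).coeff
      (p - 1)).coeff 1 = p * g.coeff p := by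
  rw [eval₂_eq_sum, Polynomial.sum, finset_sum_coeff, finset_sum_coeff]
  have hterm : ∀ m : ℕ, ∀ a : A,
      (((Polynomial.C.comp Polynomial.C) a * (Polynomial.C Polynomial.X + Polynomial.X) ^ m).coeff
        (p - 1)).coeff 1
      = a * ((m.choose (p-1)) • if (1 : ℕ) = m - (p - 1) then (1:A) else 0) := by
    intro m a
    rw [RingHom.comp_apply, add_comm (Polynomial.C Polynomial.X), coeff_C_mul, coeff_C_mul,
      coeff_X_add_C_pow]
    congr 1
    rw [mul_comm, ← nsmul_eq_mul, Polynomial.coeff_smul, Polynomial.coeff_X_pow]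
  rw [Finset.sum_congr rfl (fun m _ => hterm m (g.coeff m))]
  rw [Finset.sum_eq_single p ?h0 ?h1]
  · rw [if_pos (by omega), nsmul_eq_mul, mul_one,
      (by rw [Nat.choose_symm (by omega : 1 ≤ p), Nat.choose_one_right] :
        p.choose (p - 1) = p), mul_comm]
  case h0 =>
    intro m _ hm
    rw [if_neg (by omega), smul_zero, mul_zero]
  case h1 =>
    intro hp'
    simp [Polynomial.notMem_support_iff.mp hp']

end AuxCoeff

section AuxZMod

variable (p : ℕ) [Fact p.Prime]
set_option linter.unusedSectionVars false

lemma coeff_C_mul_mapC {A : Type} [CommRing A] (g h : Polynomial A) (a b : ℕ) :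
    ((Polynomial.C g * Polynomial.map Polynomial.C h).coeff b).coeff a
      = g.coeff a * h.coeff b := by
  rw [coeff_C_mul, Polynomial.coeff_map, mul_comm, coeff_C_mul, mul_comm]

lemma hA_sq (q : ℕ) (hq : q = p ^ 2) : ((p : ZMod q)) ^ 2 = 0 := by
  subst hq
  rw [← Nat.cast_pow, ZMod.natCast_self]

lemma zmod_ker (q : ℕ) (hq : q = p ^ 2) (hd : p ∣ q) (a : ZMod q)
    (h : ZMod.castHom hd (ZMod p) a = 0) :
    ∃ c : ZMod q, a = (p : ZMod q) * c := by
  subst hq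
  haveI : NeZero (p ^ 2) := ⟨(pow_pos (Fact.out : p.Prime).pos 2).ne'⟩
  have h1 : ((a.val : ℕ) : ZMod p) = 0 := by
    rwa [ZMod.castHom_apply, ← ZMod.natCast_val] at h
  obtain ⟨t, ht⟩ := (ZMod.natCast_eq_zero_iff _ _).mp h1
  refine ⟨(t : ZMod (p ^ 2)), ?_⟩
  have h2 : ((a.val : ℕ) : ZMod (p ^ 2)) = a := by rw [ZMod.natCast_val, ZMod.cast_id]
  rw [← h2, ht]
  push_cast
  ring

lemma zmod_mul_zero (q : ℕ) (hq : q = p ^ 2) (hd : p ∣ q) (a b : ZMod q)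
    (ha : ZMod.castHom hd (ZMod p) a = 0)
    (hb : ZMod.castHom hd (ZMod p) b = 0) :
    a * b = 0 := by
  obtain ⟨c, rfl⟩ := zmod_ker p q hq hd a ha
  obtain ⟨d, rfl⟩ := zmod_ker p q hq hd b hb
  linear_combination (c * d) * hA_sq p q hq

lemma zmod_mul_p (q : ℕ) (hq : q = p ^ 2) (hd : p ∣ q) (a : ZMod q)
    (ha : ZMod.castHom hd (ZMod p) a = 1) :
    (p : ZMod q) * a = p := by
  obtain ⟨c, hc⟩ := zmod_ker p q hq hd (a - 1) (by rw [map_sub, ha, _root_.map_one, sub_self])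
  rw [sub_eq_iff_eq_add] at hc
  rw [hc]
  linear_combination c * hA_sq p q hq

lemma zmod_p_ne (q : ℕ) (hq : q = p ^ 2) : (p : ZMod q) ≠ 0 := by
  subst hq
  haveI : NeZero (p ^ 2) := ⟨(pow_pos (Fact.out : p.Prime).pos 2).ne'⟩
  intro h0
  have hd := (ZMod.natCast_eq_zero_iff p (p ^ 2)).mp h0
  have h2 := (Fact.out : p.Prime).two_le
  have h3 := Nat.le_of_dvd (by omega) hd
  nlinarith

end AuxZMod

section AuxULift2

lemma pow_sq_zero' {p : ℕ} {A B : Type*} [CommRing A] [CommRing B] (f : A →+* B)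
    (h : (p : A) ^ 2 = 0) : (p : B) ^ 2 = 0 := by
  rw [← map_natCast f, ← map_pow, h, map_zero]

lemma cast_zero_of_hom {p : ℕ} {A B : Type*} [CommRing A] [CommRing B] (f : A →+* B)
    (h : (p : A) = 0) : (p : B) = 0 := by
  rw [← map_natCast f, h, map_zero]

lemma down_pow {B : Type} [CommRing B] (w : ULift.{u} B) (m : ℕ) :
    (w ^ m).down = w.down ^ m := by
  induction m with
  | zero => rfl
  | succ k ih => rw [pow_succ, pow_succ, ← ih]; rfl

lemma down_sum {B : Type} [CommRing B] {ι : Type} (s : Finset ι) (f : ι → ULift.{u} B) :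
    (∑ x ∈ s, f x).down = ∑ x ∈ s, (f x).down :=
  map_sum (ULift.ringEquiv : ULift.{u} B ≃+* B) f s

end AuxULift2

lemma eUnit_entry_down {n : ℕ} {i₀ j₀ : Fin n} {B : Type} [CommRing B]
    (h : i₀ ≠ j₀) (a : B) (i j : Fin n) :
    (((eUnit h (ULift.up a) : GeneralLinearGroup (Fin n) (ULift.{u} B)) :
        Matrix (Fin n) (Fin n) (ULift.{u} B)) i j).down
      = if i = j then 1 else if i = i₀ ∧ j = j₀ then a else 0 := by
  rw [eUnit_val h, uMat_entry h, apply_ite ULift.down, apply_ite ULift.down]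
  rfl

/-- Main theorem. -/
theorem no_lift_of_frobenius_GL_mod_p_squared
    (p n : ℕ) [Fact p.Prime] (hn : 2 ≤ n) :
    ¬ ∃ F : ∀ (B : Type u) [CommRing B], (p : B) ^ 2 = 0 →
        (GeneralLinearGroup (Fin n) B →* GeneralLinearGroup (Fin n) B),
      (∀ (B B' : Type u) [CommRing B] [CommRing B']
          (hB : (p : B) ^ 2 = 0) (hB' : (p : B') ^ 2 = 0)
          (f : B →+* B') (M : GeneralLinearGroup (Fin n) B),
          F B' hB' (GeneralLinearGroup.map f M)
            = GeneralLinearGroup.map f (F B hB M)) ∧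
      (∀ (B : Type u) [CommRing B] (hB : (p : B) ^ 2 = 0), (p : B) = 0 →
          ∀ (M : GeneralLinearGroup (Fin n) B) (i j : Fin n),
            (F B hB M : Matrix (Fin n) (Fin n) B) i j
              = ((M : Matrix (Fin n) (Fin n) B) i j) ^ p) := by
  rintro ⟨F, hnat, hfrob⟩
  obtain ⟨q, hq⟩ : ∃ q, q = p ^ 2 := ⟨_, rfl⟩
  have hp : p.Prime := Fact.out
  have hp2 : 2 ≤ p := hp.two_le
  have h0n : 0 < n := by omega
  have h1n : 1 < n := by omega
  set i₀ : Fin n := ⟨0, h0n⟩ with hi₀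
  set j₀ : Fin n := ⟨1, h1n⟩ with hj₀
  have h01 : i₀ ≠ j₀ := by simp [hi₀, hj₀, Fin.ext_iff]
  have hd : p ∣ q := hq ▸ dvd_pow_self p two_ne_zero
  -- base ring facts
  have hA : ((p : ZMod q)) ^ 2 = 0 := hA_sq p q hq
  -- the three rings
  have hR1 : (p : ULift.{u} (Polynomial (ZMod q))) ^ 2 = 0 :=
    pow_sq_zero' (ULift.ringEquiv.symm.toRingHom.comp Polynomial.C) hA
  have hR : (p : ULift.{u} (Polynomial (Polynomial (ZMod q)))) ^ 2 = 0 :=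
    pow_sq_zero' (ULift.ringEquiv.symm.toRingHom.comp
      ((Polynomial.C : Polynomial (ZMod q) →+* _).comp Polynomial.C)) hA
  have hS2 : (p : ULift.{u} (Polynomial (ZMod p))) ^ 2 = 0 :=
    pow_sq_zero' (ULift.ringEquiv.symm.toRingHom.comp
      ((Polynomial.C : ZMod p →+* _).comp (ZMod.castHom hd (ZMod p)))) hA
  have hSp : (p : ULift.{u} (Polynomial (ZMod p))) = 0 :=
    cast_zero_of_hom (ULift.ringEquiv.symm.toRingHom.comp (Polynomial.C : ZMod p →+* _))
      (ZMod.natCast_self p)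
  -- the ring homs (down versions)
  set π₀ : Polynomial (ZMod q) →+* Polynomial (ZMod p) :=
    Polynomial.mapRingHom (ZMod.castHom hd (ZMod p)) with hπ₀
  set f₁₀ : Polynomial (ZMod q) →+* Polynomial (Polynomial (ZMod q)) :=
    Polynomial.C with hf₁₀
  set f₂₀ : Polynomial (ZMod q) →+* Polynomial (Polynomial (ZMod q)) :=
    Polynomial.mapRingHom Polynomial.C with hf₂₀
  set f₃₀ : Polynomial (ZMod q) →+* Polynomial (Polynomial (ZMod q)) :=
    Polynomial.eval₂RingHom
      (Polynomial.C.comp Polynomial.C : ZMod q →+* Polynomial (Polynomial (ZMod q)))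
      (Polynomial.C Polynomial.X + Polynomial.X) with hf₃₀
  -- the generic unipotent and its image under F
  set E : GeneralLinearGroup (Fin n) (ULift.{u} (Polynomial (ZMod q))) :=
    eUnit h01 (ULift.up (Polynomial.X : Polynomial (ZMod q))) with hE
  set YG := F (ULift.{u} (Polynomial (ZMod q))) hR1 E with hYG
  set y : Fin n → Fin n → Polynomial (ZMod q) := fun i j =>
    ((YG : Matrix (Fin n) (Fin n) (ULift.{u} (Polynomial (ZMod q)))) i j).down with hy
  -- Fact (a) : reduction of Y mod p is the entrywise Frobenius of E
  have ha : ∀ i j : Fin n, π₀ (y i j)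
      = (if i = j then 1 else if i = i₀ ∧ j = j₀ then Polynomial.X
          else (0 : Polynomial (ZMod p))) ^ p := by
    have hπX : uhom.{u} π₀ (ULift.up (Polynomial.X : Polynomial (ZMod q)))
        = ULift.up (Polynomial.X : Polynomial (ZMod p)) := by
      rw [uhom_up]
      congr 1
      exact Polynomial.map_X _
    have hnat1 := hnat _ _ hR1 hS2 (uhom.{u} π₀) E
    rw [hE, map_eUnit _ h01, hπX] at hnat1
    intro i j
    have h5 := hfrob _ hS2 hSp (eUnit h01 (ULift.up (Polynomial.X : Polynomial (ZMod p)))) i j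
    rw [hnat1] at h5
    have h6 := congrArg ULift.down h5
    have hl : ((GeneralLinearGroup.map (uhom.{u} π₀) YG :
          GeneralLinearGroup (Fin n) (ULift.{u} (Polynomial (ZMod p)))) :
          Matrix (Fin n) (Fin n) (ULift.{u} (Polynomial (ZMod p)))) i j
        = ULift.up (π₀ (y i j)) := rfl
    rw [hl] at h6
    rw [down_pow, eUnit_entry_down h01] at h6
    exact h6
  -- Fact (b) : the additivity equation
  have hY3 : f₃₀ (y i₀ j₀) = ∑ kk : Fin n, f₁₀ (y i₀ kk) * f₂₀ (y kk j₀) := by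
    have h1X : uhom.{u} f₁₀ (ULift.up (Polynomial.X : Polynomial (ZMod q)))
        = ULift.up (Polynomial.C Polynomial.X) := rfl
    have h2X : uhom.{u} f₂₀ (ULift.up (Polynomial.X : Polynomial (ZMod q)))
        = ULift.up (Polynomial.X : Polynomial (Polynomial (ZMod q))) := by
      rw [uhom_up]
      congr 1
      exact Polynomial.map_X _
    have h3X : uhom.{u} f₃₀ (ULift.up (Polynomial.X : Polynomial (ZMod q)))
        = ULift.up (Polynomial.C Polynomial.X
            + (Polynomial.X : Polynomial (Polynomial (ZMod q)))) := by
      rw [uhom_up]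
      congr 1
      exact Polynomial.eval₂_X _ _
    have hsum : ULift.up (Polynomial.C Polynomial.X
            + (Polynomial.X : Polynomial (Polynomial (ZMod q))))
        = ULift.up (Polynomial.C Polynomial.X)
          + ULift.up (Polynomial.X : Polynomial (Polynomial (ZMod q))) := rfl
    have key : GeneralLinearGroup.map (uhom.{u} f₃₀) YG
        = GeneralLinearGroup.map (uhom.{u} f₁₀) YG * GeneralLinearGroup.map (uhom.{u} f₂₀) YG := by
      rw [hYG, ← hnat _ _ hR1 hR (uhom.{u} f₃₀) E, ← hnat _ _ hR1 hR (uhom.{u} f₁₀) E,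
        ← hnat _ _ hR1 hR (uhom.{u} f₂₀) E, ← _root_.map_mul, hE,
        map_eUnit _ h01, map_eUnit _ h01, map_eUnit _ h01, h1X, h2X, h3X, hsum, eUnit_add]
    have h7 := congrArg (fun M : GeneralLinearGroup (Fin n)
        (ULift.{u} (Polynomial (Polynomial (ZMod q)))) =>
        (((M : Matrix (Fin n) (Fin n) (ULift.{u} (Polynomial (Polynomial (ZMod q)))))
          i₀ j₀)).down) key
    have hlhs : (((GeneralLinearGroup.map (uhom.{u} f₃₀) YG :
          GeneralLinearGroup (Fin n) (ULift.{u} (Polynomial (Polynomial (ZMod q))))) :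
          Matrix (Fin n) (Fin n) (ULift.{u} (Polynomial (Polynomial (ZMod q))))) i₀ j₀).down = f₃₀ (y i₀ j₀) := rfl
    rw [hlhs] at h7
    rw [h7]
    rw [show ((GeneralLinearGroup.map (uhom.{u} f₁₀) YG
          * GeneralLinearGroup.map (uhom.{u} f₂₀) YG :
          GeneralLinearGroup (Fin n) (ULift.{u} (Polynomial (Polynomial (ZMod q))))) :
          Matrix (Fin n) (Fin n) (ULift.{u} (Polynomial (Polynomial (ZMod q)))))
        = ((GeneralLinearGroup.map (uhom.{u} f₁₀) YG :
            GeneralLinearGroup (Fin n) _) : Matrix (Fin n) (Fin n) (ULift.{u} (Polynomial (Polynomial (ZMod q)))))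
          * ((GeneralLinearGroup.map (uhom.{u} f₂₀) YG :
            GeneralLinearGroup (Fin n) _) : Matrix (Fin n) (Fin n) (ULift.{u} (Polynomial (Polynomial (ZMod q))))) from rfl,
      Matrix.mul_apply, down_sum]
    exact Finset.sum_congr rfl fun kk _ => rfl
  -- extract the coefficient of x * y^(p-1)
  have final := congrArg (fun q : Polynomial (Polynomial (ZMod q)) =>
      (q.coeff (p - 1)).coeff 1) hY3
  -- LHS
  have hLHS : ((f₃₀ (y i₀ j₀)).coeff (p - 1)).coeff 1 = p * (y i₀ j₀).coeff p :=
    coeff_subst_add p hp2 (y i₀ j₀)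
  -- coefficient facts mod p
  have hcast : ∀ (g : Polynomial (ZMod q)) (m : ℕ),
      ZMod.castHom hd (ZMod p) (g.coeff m) = (π₀ g).coeff m := by
    intro g m
    rw [hπ₀]
    exact (Polynomial.coeff_map _ _).symm
  have hc1 : ∀ kk : Fin n, ZMod.castHom hd (ZMod p) ((y i₀ kk).coeff 1) = 0 := by
    intro kk
    rw [hcast, ha i₀ kk]
    split_ifs with h1 h2
    · rw [one_pow, Polynomial.coeff_one, if_neg (by omega)]
    · rw [Polynomial.coeff_X_pow, if_neg (by omega)]
    · rw [zero_pow (by omega : p ≠ 0), Polynomial.coeff_zero]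
  have hc2 : ∀ kk : Fin n, ZMod.castHom hd (ZMod p) ((y kk j₀).coeff (p - 1)) = 0 := by
    intro kk
    rw [hcast, ha kk j₀]
    split_ifs with h1 h2
    · rw [one_pow, Polynomial.coeff_one, if_neg (by omega)]
    · rw [Polynomial.coeff_X_pow, if_neg (by omega)]
    · rw [zero_pow (by omega : p ≠ 0), Polynomial.coeff_zero]
  have hc3 : ZMod.castHom hd (ZMod p) ((y i₀ j₀).coeff p) = 1 := by
    rw [hcast, ha i₀ j₀, if_neg h01, if_pos ⟨rfl, rfl⟩, Polynomial.coeff_X_pow, if_pos rfl]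
  have hRHS : ((∑ kk : Fin n, f₁₀ (y i₀ kk) * f₂₀ (y kk j₀)).coeff (p - 1)).coeff 1 = 0 := by
    rw [Polynomial.finset_sum_coeff, Polynomial.finset_sum_coeff]
    apply Finset.sum_eq_zero
    intro kk _
    have hterm : ((f₁₀ (y i₀ kk) * f₂₀ (y kk j₀)).coeff (p - 1)).coeff 1
        = (y i₀ kk).coeff 1 * (y kk j₀).coeff (p - 1) := by
      rw [hf₁₀, hf₂₀]
      exact coeff_C_mul_mapC _ _ _ _
    rw [hterm]
    exact zmod_mul_zero p q hq hd _ _ (hc1 kk) (hc2 kk)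
  rw [hLHS, hRHS, zmod_mul_p p q hq hd _ hc3] at final
  exact zmod_p_ne p q hq final
end

section
/- Let R be a nontrivial commutative ring and q ≥ 2 an integer. Then the q-th power map defines an endomorphism of the additive group scheme G_a over R — that is, (x + y)^q = x^q + y^q holds for all elements x, y of every commutative R-algebra B — if and only if there exist a prime number p and an integer n ≥ 1 such that q = p^n and p·1 = 0 in R. -/
/-!
Testing additivity on `R[X]` with `x = X`, `y = 1` and comparing coefficients shows that the
`q`-th power map is additive over every `R`-algebra exactly when the binomial coefficients
`C(q, i)`, `0 < i < q`, vanish in `R`, i.e. when their gcd does. That gcd is `p` when `q = p ^ n`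
for a prime `p`, and `1` when `q` is not a prime power.
-/

universe u

open Finset Polynomial

theorem Nat.cast_finset_gcd_eq_zero_iff {R ι : Type*} [NonAssocSemiring R] (s : Finset ι)
    (f : ι → ℕ) : ((s.gcd f : ℕ) : R) = 0 ↔ ∀ i ∈ s, (f i : R) = 0 := by
  simp only [ringChar.spec, Finset.dvd_gcd_iff]

theorem Polynomial.natCast_choose_eq_zero_of_X_add_one_pow_eq {R : Type*} [CommSemiring R]
    {q : ℕ} (h : (X + 1 : R[X]) ^ q = X ^ q + 1) {i : ℕ} (hi : i ∈ Icc 1 (q - 1)) :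
    (q.choose i : R) = 0 := by
  rw [mem_Icc] at hi
  have hcoeff := congrArg (coeff · i) h
  simpa [coeff_X_add_one_pow, coeff_X_pow, coeff_one, show i ≠ q by omega,
    show i ≠ 0 by omega] using hcoeff

theorem add_pow_eq_of_natCast_choose_eq_zero {B : Type*} [CommSemiring B] {q : ℕ} (hq : q ≠ 0)
    (h : ∀ i ∈ Icc 1 (q - 1), (q.choose i : B) = 0) (x y : B) :
    (x + y) ^ q = x ^ q + y ^ q := by
  obtain ⟨m, rfl⟩ := Nat.exists_eq_succ_of_ne_zero hq
  have hmiddle : ∑ i ∈ range m, x ^ (i + 1) * y ^ (m + 1 - (i + 1)) * (m + 1).choose (i + 1)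
      = 0 := by
    refine sum_eq_zero fun i hi => ?_
    have hi : i < m := mem_range.1 hi
    rw [h (i + 1) (mem_Icc.2 ⟨by omega, by omega⟩), mul_zero]
  rw [add_pow, sum_range_succ, sum_range_succ', hmiddle]
  simp [add_comm]

theorem forall_add_pow_eq_iff_natCast_gcd_choose_eq_zero (R : Type u) [CommRing R] {q : ℕ}
    (hq : q ≠ 0) :
    (∀ (B : Type u) [CommRing B] [Algebra R B] (x y : B), (x + y) ^ q = x ^ q + y ^ q) ↔
      (((Icc 1 (q - 1)).gcd q.choose : ℕ) : R) = 0 := by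
  rw [Nat.cast_finset_gcd_eq_zero_iff]
  refine ⟨fun h i hi => natCast_choose_eq_zero_of_X_add_one_pow_eq (by simpa using h R[X] X 1) hi,
    fun h B _ _ => add_pow_eq_of_natCast_choose_eq_zero hq fun i hi => ?_⟩
  rw [← map_natCast (algebraMap R B), h i hi, map_zero]

theorem natCast_gcd_choose_eq_zero_iff {R : Type*} [NonAssocSemiring R] [Nontrivial R] {q : ℕ}
    (hq : 1 < q) :
    (((Icc 1 (q - 1)).gcd q.choose : ℕ) : R) = 0 ↔
      ∃ (p n : ℕ), p.Prime ∧ 1 ≤ n ∧ q = p ^ n ∧ (p : R) = 0 := by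
  by_cases hpow : IsPrimePow q
  · obtain ⟨p, n, hp, hn, rfl⟩ := (isPrimePow_nat_iff _).1 hpow
    rw [Choose.gcd_choose_eq_minFac_of_isPrimePow hpow, hp.pow_minFac hn.ne']
    refine ⟨fun h => ⟨p, n, hp, hn, rfl, h⟩, ?_⟩
    rintro ⟨p', n', hp', hn', heq, h⟩
    rwa [← hp.pow_minFac hn.ne', heq, hp'.pow_minFac (by omega)]
  · rw [Choose.gcd_choose_eq_one_of_not_isPrimePow hq hpow, Nat.cast_one]
    simp only [one_ne_zero, false_iff, not_exists, not_and]
    rintro p n hp hn rfl -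
    exact hpow ((isPrimePow_nat_iff _).2 ⟨p, n, hp, hn, rfl⟩)

/-- For a nontrivial commutative ring `R` and an integer `q ≥ 2`, the `q`-th power map defines an
endomorphism of the additive group scheme `𝔾ₐ` over `R` — i.e. `(x + y)^q = x^q + y^q` for all
elements `x, y` of every commutative `R`-algebra `B` — if and only if `q = p^n` for some prime
`p` with `p·1 = 0` in `R` and some `n ≥ 1`. -/
theorem qth_power_additive_iff_prime_power_char
    (R : Type u) [CommRing R] [Nontrivial R] (q : ℕ) (hq : 2 ≤ q) :
    (∀ (B : Type u) [CommRing B] [Algebra R B] (x y : B), (x + y) ^ q = x ^ q + y ^ q) ↔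
      ∃ (p n : ℕ), p.Prime ∧ 1 ≤ n ∧ q = p ^ n ∧ (p : R) = 0 := by
  rw [forall_add_pow_eq_iff_natCast_gcd_choose_eq_zero R (by omega),
    natCast_gcd_choose_eq_zero_iff (by omega)]
end

section
/- Let k be a field, G a group, and ρ : G → GL(V) a k-linear representation of G on a k-vector space V. Suppose there is a finite chain of G-invariant subspaces 0 = V_0 ⊆ V_1 ⊆ ⋯ ⊆ V_n = V such that the induced action of G on each successive quotient V_m / V_{m−1} is trivial. If every group homomorphism from G to the additive group (k, +) is trivial, then G acts trivially on V, i.e. ρ(g) = id_V for all g ∈ G. -/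
/-!
If every vector of the previous filtration step is fixed, then for `v` in the next step the map
`g ↦ ρ g v - v` takes fixed values, which makes it a homomorphism `G → (V, +)`. Composing with
linear functionals gives homomorphisms `G → (k, +)`, which vanish, so `ρ g v = v`. Induction along
the filtration then shows that every vector is fixed.
-/

theorem eq_zero_of_map_mul_eq_add {k V G : Type*} [Semiring k] [AddCommMonoid V]
    [Module k V] [Module.Projective k V] [Mul G]
    (hhom : ∀ φ : G → k, (∀ g h : G, φ (g * h) = φ g + φ h) → ∀ g : G, φ g = 0)
    (f : G → V) (hf : ∀ g h : G, f (g * h) = f g + f h) (g : G) : f g = 0 := by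
  rw [← Module.forall_dual_apply_eq_zero_iff k]
  intro φ
  exact hhom (φ ∘ f) (fun a b => by simp only [Function.comp_apply, hf, map_add]) g

namespace Representation

variable {k G V : Type*} [CommRing k] [Group G] [AddCommGroup V] [Module k V]

theorem apply_mul_sub_self_of_sub_mem_invariants (ρ : Representation k G V) {v : V}
    (hv : ∀ h : G, ρ h v - v ∈ ρ.invariants) (g h : G) :
    ρ (g * h) v - v = (ρ g v - v) + (ρ h v - v) := by
  have hfix : ρ g (ρ h v - v) = ρ h v - v := (ρ.mem_invariants _).mp (hv h) g
  rw [map_sub] at hfix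
  rw [map_mul, Module.End.mul_apply, sub_eq_iff_eq_add.mp hfix]
  abel

theorem mem_invariants_of_sub_mem_invariants [Module.Projective k V]
    (hhom : ∀ φ : G → k, (∀ g h : G, φ (g * h) = φ g + φ h) → ∀ g : G, φ g = 0)
    (ρ : Representation k G V) {v : V} (hv : ∀ h : G, ρ h v - v ∈ ρ.invariants) :
    v ∈ ρ.invariants := fun g =>
  sub_eq_zero.mp <| eq_zero_of_map_mul_eq_add hhom (fun g => ρ g v - v)
    (ρ.apply_mul_sub_self_of_sub_mem_invariants hv) g

end Representation

theorem trivial_of_filtration_by_trivials_general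
    (k : Type*) [Field k] (V : Type*) [AddCommGroup V] [Module k V]
    (G : Type*) [Group G] (ρ : Representation k G V)
    (n : ℕ) (W : Fin (n + 1) → Submodule k V)
    (h0 : W 0 = ⊥) (hlast : W (Fin.last n) = ⊤)
    (htriv : ∀ (g : G) (m : Fin n), ∀ v ∈ W m.succ, ρ g v - v ∈ W m.castSucc)
    (hhom : ∀ φ : G → k, (∀ g h : G, φ (g * h) = φ g + φ h) → ∀ g : G, φ g = 0) :
    ∀ (g : G) (v : V), ρ g v = v := by
  have hW : ∀ m : Fin (n + 1), W m ≤ ρ.invariants := by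
    intro m
    induction m using Fin.induction with
    | zero => simp only [h0, bot_le]
    | succ m ih =>
      exact fun v hv => ρ.mem_invariants_of_sub_mem_invariants hhom fun h => ih (htriv h m v hv)
  intro g v
  exact hW (Fin.last n) (hlast ▸ Submodule.mem_top) g

/-- If a representation `ρ` of a group `G` on a `k`-vector space `V` admits a finite chain of
`G`-invariant subspaces `0 = W 0 ⊆ W 1 ⊆ ⋯ ⊆ W n = V` on whose successive quotients `G` acts
trivially, and if every group homomorphism from `G` to the additive group `(k, +)` is trivial,
then `G` acts trivially on `V`. -/
theorem trivial_of_filtration_by_trivials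
    (k : Type*) [Field k] (V : Type*) [AddCommGroup V] [Module k V]
    (G : Type*) [Group G] (ρ : Representation k G V)
    (n : ℕ) (W : Fin (n + 1) → Submodule k V)
    (hmono : Monotone W) (h0 : W 0 = ⊥) (hlast : W (Fin.last n) = ⊤)
    (hinv : ∀ (g : G) (m : Fin (n + 1)), ∀ v ∈ W m, ρ g v ∈ W m)
    (htriv : ∀ (g : G) (m : Fin n), ∀ v ∈ W m.succ, ρ g v - v ∈ W m.castSucc)
    (hhom : ∀ φ : G → k, (∀ g h : G, φ (g * h) = φ g + φ h) → ∀ g : G, φ g = 0) :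
    ∀ (g : G) (v : V), ρ g v = v :=
  trivial_of_filtration_by_trivials_general k V G ρ n W h0 hlast htriv hhom
end
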